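/- Let P be the transition matrix of a positive recurrent single-birth Markov chain on ℤ⁺ with stationary distribution π having finite mean, and assume S_P := sup_{h∈H} sup_{l∈ℤ⁺} |m_l(h)| < ∞. Let Q be a transition matrix on ℤ⁺ and let X be a random variable whose distribution is stationary for Q, with finite mean, and assume ∑_i ℙ(X=i) ∑_j ∑_{k>j} Q_{i,k} < ∞. Then d_TV(X,π) ≤ S_P · ∑_{i=0}^∞ ℙ(X=i) ∑_{j=0}^∞ | ∑_{k=j+1}^∞ (Q_{i,k} − P_{i,k}) |. -/

import Mathlib

open scoped BigOperators

/-- `P` is a (row-stochastic) transition matrix on `ℤ⁺ = ℕ`. -/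
def IsTransMat (P : ℕ → ℕ → ℝ) : Prop :=
  (∀ i j, 0 ≤ P i j) ∧ ∀ i, HasSum (P i) 1

/-- `P` is the transition matrix of a single-birth chain:
`P i (i+1) > 0` and `P i j = 0` for `j > i + 1`. -/
def IsSingleBirth (P : ℕ → ℕ → ℝ) : Prop :=
  IsTransMat P ∧ (∀ i, 0 < P i (i + 1)) ∧ ∀ i j, i + 1 < j → P i j = 0

/-- `pim` is a stationary distribution for `P`. -/
def IsStationaryDistr (P : ℕ → ℕ → ℝ) (pim : ℕ → ℝ) : Prop :=
  (∀ j, 0 ≤ pim j) ∧ HasSum pim 1 ∧ ∀ j, ∑' i, pim i * P i j = pim j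

/-- Tail probability `∑_{k > j} μ k` of a mass function `μ`. -/
noncomputable def tail (μ : ℕ → ℝ) (j : ℕ) : ℝ := ∑' k, if j < k then μ k else 0

/-- Total variation distance between two mass functions on `ℕ`:
`d_TV = ∑_j |μ j - ν j| = sup_{|h| ≤ 1} |𝔼 h(X) - 𝔼 h(Y)|`. -/
noncomputable def dTV (μ ν : ℕ → ℝ) : ℝ := ∑' j, |μ j - ν j|

/-- `m` is the sequence `m_j(h)` given by the single-birth recursion:
`m_0(h) = ĥ(0)/P_{0,1}` and, for `j ≥ 1`,
`m_j(h) = (1/P_{j,j+1}) (ĥ(j) + ∑_{k=0}^{j-1} m_k(h) ∑_{l=0}^{k} P_{j,l})`,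
where `ĥ(j) = h(j) - ∑_k h(k) π_k`. -/
def IsMSeq (P : ℕ → ℕ → ℝ) (pim : ℕ → ℝ) (h : ℕ → ℝ) (m : ℕ → ℝ) : Prop :=
  m 0 = (h 0 - ∑' k, h k * pim k) / P 0 1 ∧
  ∀ j, 1 ≤ j →
    m j = (1 / P j (j + 1)) *
      ((h j - ∑' k, h k * pim k) +
        ∑ k ∈ Finset.range j, m k * ∑ l ∈ Finset.range (k + 1), P j l)

/-- The set of values `|m_l(h)|` over `h ∈ H` (i.e. `|h| ≤ 1`) and `l ∈ ℤ⁺`;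
its supremum is `S_P`. -/
def MSet (P : ℕ → ℕ → ℝ) (pim : ℕ → ℝ) : Set ℝ :=
  {x | ∃ h m, (∀ j, |h j| ≤ 1) ∧ IsMSeq P pim h m ∧ ∃ l, x = |m l|}



private lemma my_sign_mul_self (x : ℝ) : Real.sign x * x = |x| := by
  rcases lt_trichotomy x 0 with h|h|h
  · rw [Real.sign_of_neg h, abs_of_neg h]; ring
  · simp [h]
  · rw [Real.sign_of_pos h, abs_of_pos h]; ring

private lemma summable_of_abs_le {ι : Type*} {f g : ι → ℝ} (hg : Summable g)
    (h : ∀ n, |f n| ≤ g n) : Summable f :=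
  summable_abs_iff.mp (Summable.of_nonneg_of_le (fun n => abs_nonneg _) h hg)

private lemma summable_marginal {f : ℕ × ℕ → ℝ} (hf : Summable f) :
    Summable fun j => ∑' k, f (j, k) :=
  (hf.hasSum.prod_fiberwise fun j => (hf.prod_factor j).hasSum).summable

noncomputable def mseq (P : ℕ → ℕ → ℝ) (c : ℝ) (h : ℕ → ℝ) : ℕ → ℝ
  | j => (1 / P j (j + 1)) * ((h j - c) + ∑ k ∈ (Finset.range j).attach,
      mseq P c h k.1 * ∑ l ∈ Finset.range (k.1 + 1), P j l)
  termination_by j => j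
  decreasing_by exact Finset.mem_range.mp k.2

lemma mseq_eq (P : ℕ → ℕ → ℝ) (c : ℝ) (h : ℕ → ℝ) (j : ℕ) :
    mseq P c h j = (1 / P j (j + 1)) * ((h j - c) + ∑ k ∈ Finset.range j,
      mseq P c h k * ∑ l ∈ Finset.range (k + 1), P j l) := by
  rw [mseq]; congr 1; congr 1
  exact Finset.sum_attach (Finset.range j)
    (fun k => mseq P c h k * ∑ l ∈ Finset.range (k + 1), P j l)

private lemma poisson (P : ℕ → ℕ → ℝ) (c : ℝ) (h : ℕ → ℝ)
    (hProw : ∀ j, ∑ k ∈ Finset.range (j + 2), P j k = 1)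
    (hPpos : ∀ i, 0 < P i (i + 1)) (j : ℕ) :
    ∑ k ∈ Finset.range (j + 2), P j k * (∑ l ∈ Finset.range k, mseq P c h l)
      = (∑ l ∈ Finset.range j, mseq P c h l) + (h j - c) := by
  set m : ℕ → ℝ := mseq P c h with hm
  set f : ℕ → ℝ := fun n => ∑ l ∈ Finset.range n, m l with hf
  show ∑ k ∈ Finset.range (j + 2), P j k * f k = f j + (h j - c)
  have hp := hPpos j
  have hrec : P j (j + 1) * m j
      = (h j - c) + ∑ k ∈ Finset.range j, m k * ∑ l ∈ Finset.range (k + 1), P j l := by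
    rw [hm, mseq_eq P c h j, ← mul_assoc, mul_one_div, div_self (ne_of_gt hp), one_mul]
  -- the swap identity
  have h1 : ∀ k : ℕ, (∑ l ∈ Finset.Ico k j, m l)
      = ∑ l ∈ Finset.range j, if k ≤ l then m l else 0 := by
    intro k
    rw [← Finset.sum_filter]
    congr 1
    ext l
    simp only [Finset.mem_Ico, Finset.mem_filter, Finset.mem_range]
    omega
  have hswap : ∑ k ∈ Finset.range (j + 1), P j k * (∑ l ∈ Finset.Ico k j, m l)
      = ∑ l ∈ Finset.range j, m l * ∑ k ∈ Finset.range (l + 1), P j k := by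
    calc ∑ k ∈ Finset.range (j + 1), P j k * (∑ l ∈ Finset.Ico k j, m l)
        = ∑ k ∈ Finset.range (j + 1), ∑ l ∈ Finset.range j,
            (if k ≤ l then P j k * m l else 0) := by
          refine Finset.sum_congr rfl fun k _ => ?_
          rw [h1, Finset.mul_sum]
          refine Finset.sum_congr rfl fun l _ => ?_
          rw [mul_ite, mul_zero]
      _ = ∑ l ∈ Finset.range j, ∑ k ∈ Finset.range (j + 1),
            (if k ≤ l then P j k * m l else 0) := Finset.sum_comm
      _ = ∑ l ∈ Finset.range j, m l * ∑ k ∈ Finset.range (l + 1), P j k := by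
          refine Finset.sum_congr rfl fun l hl => ?_
          have hl' : l < j := Finset.mem_range.mp hl
          rw [← Finset.sum_subset (Finset.range_subset_range.mpr (by omega : l + 1 ≤ j + 1))
            (fun k hk hk2 => by
              rw [if_neg]
              simp only [Finset.mem_range] at hk2
              omega)]
          rw [Finset.mul_sum]
          refine Finset.sum_congr rfl fun k hk => ?_
          rw [if_pos (Nat.lt_succ_iff.mp (Finset.mem_range.mp hk)), mul_comm]
  have e2 : ∑ k ∈ Finset.range (j + 2), P j k * (f k - f j)
      = (∑ k ∈ Finset.range (j + 2), P j k * f k) - f j := by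
    simp_rw [mul_sub]
    rw [Finset.sum_sub_distrib, ← Finset.sum_mul, hProw j, one_mul]
  have e3 : ∑ k ∈ Finset.range (j + 2), P j k * (f k - f j)
      = (∑ k ∈ Finset.range (j + 1), P j k * (f k - f j)) + P j (j + 1) * m j := by
    rw [Finset.sum_range_succ]
    congr 2
    show f (j + 1) - f j = m j
    rw [hf]
    simp [Finset.sum_range_succ]
  have e4 : ∑ k ∈ Finset.range (j + 1), P j k * (f k - f j)
      = -∑ k ∈ Finset.range (j + 1), P j k * (∑ l ∈ Finset.Ico k j, m l) := by
    rw [← Finset.sum_neg_distrib]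
    refine Finset.sum_congr rfl fun k hk => ?_
    rw [Finset.sum_Ico_eq_sub m (Nat.lt_succ_iff.mp (Finset.mem_range.mp hk))]
    show P j k * (f k - f j) = -(P j k * (f j - f k))
    ring
  have := e2.symm.trans (e3.trans (by rw [e4, hswap]))
  -- this : ∑ P j k * f k - f j = -(∑ l, m l * ∑ ...) + P j (j+1) * m j
  rw [hrec] at this
  linarith [this]

private lemma tri_tsum_row (a : ℝ) (k : ℕ) :
    ∑' l : ℕ, (if l < k then a else 0) = a * k := by
  rw [tsum_eq_sum (s := Finset.range k) (fun l hl => if_neg (by simpa using hl))]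
  rw [Finset.sum_congr rfl fun l hl => if_pos (Finset.mem_range.mp hl)]
  simp [mul_comm]

private lemma tri_prod_summable {a : ℕ → ℝ} (ha : ∀ k, 0 ≤ a k)
    (hak : Summable fun k => a k * k) :
    Summable (fun p : ℕ × ℕ => if p.2 < p.1 then a p.1 else 0) := by
  rw [summable_prod_of_nonneg (fun p => by dsimp only; split <;> simp [ha])]
  constructor
  · intro k
    exact summable_of_ne_finset_zero (s := Finset.range k)
      (fun l hl => if_neg (by simpa using hl))
  · exact hak.congr fun k => (tri_tsum_row (a k) k).symm

private lemma tri_marginal_summable {a : ℕ → ℝ} (ha : ∀ k, 0 ≤ a k)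
    (hak : Summable fun k => a k * k) :
    Summable (fun l => ∑' k, if l < k then a k else 0) := by
  have h2 := summable_marginal ((tri_prod_summable ha hak).prod_symm)
  exact h2.congr fun l => tsum_congr fun k => by simp [Prod.swap]

private lemma tri_tsum_eq {a : ℕ → ℝ} (ha : ∀ k, 0 ≤ a k)
    (hak : Summable fun k => a k * k) (ha1 : Summable a) :
    ∑' l : ℕ, ∑' k : ℕ, (if l < k then a k else 0) = ∑' k, a k * k := by
  have hcomm := Summable.tsum_comm' (f := fun k l => if l < k then a k else 0)
    (tri_prod_summable ha hak)
    (fun k => summable_of_ne_finset_zero (s := Finset.range k)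
      (fun l hl => if_neg (by simpa using hl)))
    (fun l => summable_of_abs_le ha1 (fun k => by
      show |if l < k then a k else 0| ≤ a k
      split <;> simp [abs_of_nonneg (ha _), ha _]))
  rw [hcomm]
  exact tsum_congr fun k => tri_tsum_row (a k) k

private lemma row_bound (p q m : ℕ → ℝ) (S : ℝ) (n : ℕ)
    (hp0 : ∀ k, 0 ≤ p k) (hq0 : ∀ k, 0 ≤ q k)
    (hp1 : HasSum p 1) (hq1 : Summable q)
    (hpfin : ∀ k, k ∉ Finset.range n → p k = 0)
    (hqk : Summable fun k => q k * k)
    (hmS : ∀ l, |m l| ≤ S) :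
    |(∑ k ∈ Finset.range n, p k * (∑ l ∈ Finset.range k, m l))
        - ∑' k, q k * (∑ l ∈ Finset.range k, m l)|
      ≤ S * ∑' l : ℕ, |∑' k, if l < k then q k - p k else 0| ∧
    ∑' l : ℕ, |∑' k, if l < k then q k - p k else 0| ≤ (∑' k, q k * k) + n := by
  have hS0 : 0 ≤ S := le_trans (abs_nonneg _) (hmS 0)
  set f : ℕ → ℝ := fun k => ∑ l ∈ Finset.range k, m l with hf
  have hfabs : ∀ k : ℕ, |f k| ≤ S * k := by
    intro k
    calc |f k| ≤ ∑ l ∈ Finset.range k, |m l| := Finset.abs_sum_le_sum_abs _ _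
    _ ≤ ∑ l ∈ Finset.range k, S := Finset.sum_le_sum fun l _ => hmS l
    _ = S * k := by simp [mul_comm]
  have hpk : Summable fun k => p k * k :=
    summable_of_ne_finset_zero (s := Finset.range n)
      (fun k hk => by rw [hpfin k hk, zero_mul])
  -- tail sums
  set tq : ℕ → ℝ := fun l => ∑' k, if l < k then q k else 0 with htq
  set tp : ℕ → ℝ := fun l => ∑' k, if l < k then p k else 0 with htp
  have hitq : ∀ l, Summable fun k => if l < k then q k else 0 := fun l =>
    summable_of_abs_le hq1 (fun k => by
      split <;> simp [abs_of_nonneg (hq0 _), hq0 _])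
  have hitp : ∀ l, Summable fun k => if l < k then p k else 0 := fun l =>
    summable_of_abs_le hp1.summable (fun k => by
      split <;> simp [abs_of_nonneg (hp0 _), hp0 _])
  have hitqp : ∀ l, Summable fun k => if l < k then q k - p k else 0 := fun l =>
    ((hitq l).sub (hitp l)).congr fun k => by split <;> simp
  set D : ℕ → ℝ := fun l => ∑' k, if l < k then q k - p k else 0 with hD
  have hDle : ∀ l, |D l| ≤ tq l + tp l := by
    intro l
    have h1 : |D l| ≤ ∑' k, |if l < k then q k - p k else 0| := by
      simpa [Real.norm_eq_abs] using norm_tsum_le_tsum_norm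
        (f := fun k => if l < k then q k - p k else 0)
        (by simpa [Real.norm_eq_abs] using (hitqp l).abs)
    refine h1.trans ?_
    rw [htq, htp, ← Summable.tsum_add (hitq l) (hitp l)]
    refine Summable.tsum_le_tsum (fun k => ?_) (hitqp l).abs ((hitq l).add (hitp l))
    split
    · exact (abs_sub _ _).trans (by
        rw [abs_of_nonneg (hq0 _), abs_of_nonneg (hp0 _)])
    · simp
  have htqs : Summable tq := tri_marginal_summable hq0 hqk
  have htps : Summable tp := tri_marginal_summable hp0 hpk
  have hDsum : Summable fun l => |D l| :=
    summable_of_abs_le (htqs.add htps) (fun l => by rw [abs_abs]; exact hDle l)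
  have hRle : ∑' l, |D l| ≤ (∑' k, q k * k) + n := by
    have h1 : ∑' l, |D l| ≤ ∑' l, (tq l + tp l) :=
      Summable.tsum_le_tsum hDle hDsum (htqs.add htps)
    rw [Summable.tsum_add htqs htps] at h1
    refine h1.trans ?_
    have h2 : ∑' l, tq l = ∑' k, q k * k := tri_tsum_eq hq0 hqk hq1
    have h3 : ∑' l, tp l = ∑' k, p k * k := tri_tsum_eq hp0 hpk hp1.summable
    have h4 : ∑' k, p k * k ≤ n := by
      rw [tsum_eq_sum (s := Finset.range n)
        (fun k hk => by rw [hpfin k hk, zero_mul])]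
      calc ∑ k ∈ Finset.range n, p k * k ≤ ∑ k ∈ Finset.range n, p k * n := by
            refine Finset.sum_le_sum fun k hk => ?_
            exact mul_le_mul_of_nonneg_left
              (Nat.cast_le.mpr (Finset.mem_range.mp hk).le) (hp0 k)
      _ = (∑ k ∈ Finset.range n, p k) * n := by rw [Finset.sum_mul]
      _ = 1 * n := by
          rw [(hasSum_sum_of_ne_finset_zero hpfin).unique (hp1)]
      _ = n := one_mul _
    rw [h2, h3]
    linarith
  refine ⟨?_, hRle⟩
  -- Abel part
  have hqf : Summable fun k => q k * f k :=
    summable_of_abs_le (hqk.mul_left S) (fun k => by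
      rw [abs_mul, abs_of_nonneg (hq0 k), ← mul_assoc, mul_comm S (q k), mul_assoc]
      exact mul_le_mul_of_nonneg_left (hfabs k) (hq0 k))
  have hpfeq : (∑ k ∈ Finset.range n, p k * f k) = ∑' k, p k * f k :=
    (tsum_eq_sum (fun k hk => by rw [hpfin k hk, zero_mul])).symm
  have hpf : Summable fun k => p k * f k :=
    summable_of_ne_finset_zero (s := Finset.range n)
      (fun k hk => by rw [hpfin k hk, zero_mul])
  have hdiff : (∑ k ∈ Finset.range n, p k * f k) - ∑' k, q k * f k
      = ∑' k, (p k - q k) * f k := by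
    rw [hpfeq, ← Summable.tsum_sub hpf hqf]
    exact tsum_congr fun k => by ring
  -- double sum swap
  have hbound : ∀ (k l : ℕ), |if l < k then (p k - q k) * m l else 0|
      ≤ (if l < k then S * (p k + q k) else 0) := by
    intro k l
    split
    · rw [abs_mul]
      calc |p k - q k| * |m l| ≤ (p k + q k) * S := by
            refine mul_le_mul ((abs_sub _ _).trans ?_) (hmS l) (abs_nonneg _)
              (add_nonneg (hp0 _) (hq0 _))
            rw [abs_of_nonneg (hp0 _), abs_of_nonneg (hq0 _)]
      _ = S * (p k + q k) := mul_comm _ _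
    · simp
  have hSpq : Summable fun k => (S * (p k + q k)) * k :=
    ((hpk.add hqk).mul_left S).congr fun k => by ring
  have huncur : Summable (Function.uncurry fun k l =>
      if l < k then (p k - q k) * m l else 0) := by
    refine summable_of_abs_le
      (tri_prod_summable (a := fun k => S * (p k + q k))
        (fun k => mul_nonneg hS0 (add_nonneg (hp0 _) (hq0 _))) hSpq) (fun pr => ?_)
    exact hbound pr.1 pr.2
  have hfibk : ∀ k, Summable fun l => if l < k then (p k - q k) * m l else 0 :=
    fun k => summable_of_ne_finset_zero (s := Finset.range k)
      (fun l hl => if_neg (by simpa using hl))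
  have hfibl : ∀ l, Summable fun k => if l < k then (p k - q k) * m l else 0 :=
    fun l => summable_of_abs_le ((hp1.summable.add hq1).mul_left S)
      (fun k => (hbound k l).trans (by
        split
        · exact le_refl _
        · exact mul_nonneg hS0 (add_nonneg (hp0 _) (hq0 _))))
  have hA : ∀ k, (p k - q k) * f k = ∑' l, if l < k then (p k - q k) * m l else 0 := by
    intro k
    rw [tsum_eq_sum (s := Finset.range k) (fun l hl => if_neg (by simpa using hl))]
    rw [Finset.sum_congr rfl (fun l hl => if_pos (Finset.mem_range.mp hl))]
    exact Finset.mul_sum _ _ _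
  have hswap2 := Summable.tsum_comm' (f := fun k l => if l < k then (p k - q k) * m l else 0)
    huncur hfibk hfibl
  have hEl : ∀ l, (∑' k, if l < k then (p k - q k) * m l else 0) = (-(D l)) * m l := by
    intro l
    have h5 : ∀ k : ℕ, (if l < k then (p k - q k) * m l else 0)
        = (-(if l < k then q k - p k else 0)) * m l := fun k => by split <;> ring
    rw [tsum_congr h5, tsum_mul_right, tsum_neg]
  have htq0 : ∀ l, 0 ≤ tq l := fun l => tsum_nonneg fun k => by
    split <;> simp [hq0 _]
  have htp0 : ∀ l, 0 ≤ tp l := fun l => tsum_nonneg fun k => by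
    split <;> simp [hp0 _]
  have habsE : Summable fun l => |(-(D l)) * m l| :=
    summable_of_abs_le ((htqs.add htps).mul_right S) (fun l => by
      rw [abs_abs, abs_mul, abs_neg]
      exact mul_le_mul (hDle l) (hmS l) (abs_nonneg _)
        (add_nonneg (htq0 l) (htp0 l)))
  calc |(∑ k ∈ Finset.range n, p k * f k) - ∑' k, q k * f k|
      = |∑' l, (-(D l)) * m l| := by
        rw [hdiff, tsum_congr hA, ← hswap2, tsum_congr hEl]
    _ ≤ ∑' l, |(-(D l)) * m l| := by
        have := norm_tsum_le_tsum_norm (f := fun l => (-(D l)) * m l)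
          (by simp only [Real.norm_eq_abs]; exact habsE)
        simp only [Real.norm_eq_abs] at this
        exact this
    _ ≤ ∑' l, |D l| * S := by
        refine Summable.tsum_le_tsum (fun l => ?_) habsE (hDsum.mul_right S)
        rw [abs_mul, abs_neg]
        exact mul_le_mul_of_nonneg_left (hmS l) (abs_nonneg _)
    _ = S * ∑' l, |D l| := by rw [tsum_mul_right, mul_comm]

private lemma W_summable (Q : ℕ → ℕ → ℝ) (μ : ℕ → ℝ)
    (hμ0 : ∀ j, 0 ≤ μ j) (hQ0 : ∀ i j, 0 ≤ Q i j)
    (hfin : (∑' i : ℕ, ∑' j : ℕ, ∑' k : ℕ,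
        if j < k then ENNReal.ofReal (μ i * Q i k) else 0) ≠ ⊤) :
    Summable fun pr : ℕ × ℕ => μ pr.1 * (Q pr.1 pr.2 * (pr.2 : ℝ)) := by
  have key : (∑' pr : ℕ × ℕ, ENNReal.ofReal (μ pr.1 * (Q pr.1 pr.2 * pr.2))) ≠ ⊤ := by
    have heq : ∀ i : ℕ, (∑' j : ℕ, ∑' k : ℕ,
        if j < k then ENNReal.ofReal (μ i * Q i k) else 0)
        = ∑' k : ℕ, ENNReal.ofReal (μ i * (Q i k * k)) := by
      intro i
      rw [ENNReal.tsum_comm]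
      refine tsum_congr fun k => ?_
      rw [tsum_eq_sum (s := Finset.range k) (fun j hj => if_neg (by simpa using hj))]
      rw [Finset.sum_congr rfl (fun j hj => if_pos (Finset.mem_range.mp hj))]
      rw [Finset.sum_const, Finset.card_range, nsmul_eq_mul]
      rw [← ENNReal.ofReal_natCast k, ← ENNReal.ofReal_mul (Nat.cast_nonneg k)]
      congr 1
      ring
    have h2 : (∑' pr : ℕ × ℕ, ENNReal.ofReal (μ pr.1 * (Q pr.1 pr.2 * pr.2)))
        = ∑' i : ℕ, ∑' j : ℕ, ∑' k : ℕ,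
            if j < k then ENNReal.ofReal (μ i * Q i k) else 0 := by
      rw [ENNReal.tsum_prod (f := fun i k => ENNReal.ofReal (μ i * (Q i k * k)))]
      exact tsum_congr fun i => (heq i).symm
    rw [h2]
    exact hfin
  exact (ENNReal.summable_toReal key).congr fun pr =>
    ENNReal.toReal_ofReal (mul_nonneg (hμ0 _)
      (mul_nonneg (hQ0 _ _) (Nat.cast_nonneg _)))

/-- **Corollary 3, first bound (comparison of stationary distributions).**
If `X` (with mass function `μ`) has the stationary distribution of a chain
with transition matrix `Q`, both means are finite,
`∑_i ℙ(X=i) ∑_j ∑_{k>j} Q_{i,k} < ∞`, and `S_P < ∞`, then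
`d_TV(X, π) ≤ S_P ∑_i ℙ(X=i) ∑_j |∑_{k>j} (Q_{i,k} - P_{i,k})|`. -/
theorem comparison_of_stationary_distributions
    (P : ℕ → ℕ → ℝ) (pim : ℕ → ℝ)
    (hP : IsSingleBirth P) (hpim : IsStationaryDistr P pim)
    (hpimMean : Summable fun k : ℕ => (k : ℝ) * pim k)
    (hSfin : BddAbove (MSet P pim))
    (Q : ℕ → ℕ → ℝ) (hQ : IsTransMat Q)
    (μ : ℕ → ℝ) (hμ0 : ∀ j, 0 ≤ μ j) (hμ1 : HasSum μ 1)
    (hμstat : ∀ j, ∑' i, μ i * Q i j = μ j)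
    (hμMean : Summable fun k : ℕ => (k : ℝ) * μ k)
    (hfin : (∑' i : ℕ, ∑' j : ℕ, ∑' k : ℕ,
        if j < k then ENNReal.ofReal (μ i * Q i k) else 0) ≠ ⊤) :
    dTV μ pim ≤ sSup (MSet P pim) *
      ∑' i, μ i * ∑' j : ℕ, |∑' k, if j < k then Q i k - P i k else 0| := by
  classical
  obtain ⟨⟨hP0, hPsum⟩, hPpos, hPsb⟩ := hP
  obtain ⟨hpim0, hpim1, hpimstat⟩ := hpim
  obtain ⟨hQ0, hQsum⟩ := hQ
  have hμsum : Summable μ := hμ1.summable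
  set h : ℕ → ℝ := fun j => Real.sign (μ j - pim j) with hhdef
  have habs : ∀ j, |h j| ≤ 1 := by
    intro j
    rcases lt_trichotomy (μ j - pim j) 0 with hx | hx | hx
    · show |Real.sign (μ j - pim j)| ≤ 1
      rw [Real.sign_of_neg hx]; norm_num
    · show |Real.sign (μ j - pim j)| ≤ 1
      rw [hx, Real.sign_zero]; norm_num
    · show |Real.sign (μ j - pim j)| ≤ 1
      rw [Real.sign_of_pos hx]; norm_num
  set c : ℝ := ∑' k, h k * pim k with hc
  set m : ℕ → ℝ := mseq P c h with hm
  set f : ℕ → ℝ := fun n => ∑ l ∈ Finset.range n, m l with hf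
  have hmIs : IsMSeq P pim h m := by
    refine ⟨?_, fun j hj => ?_⟩
    · rw [hm, mseq_eq, ← hc, Finset.range_zero, Finset.sum_empty, add_zero,
        one_div, inv_mul_eq_div]
    · rw [hm, mseq_eq, ← hc]
  set S := sSup (MSet P pim) with hS
  have hmS : ∀ l, |m l| ≤ S := fun l =>
    le_csSup hSfin (show |m l| ∈ MSet P pim from ⟨h, m, habs, hmIs, l, rfl⟩)
  have hS0 : 0 ≤ S := le_trans (abs_nonneg _) (hmS 0)
  have hfabs : ∀ k : ℕ, |f k| ≤ S * k := by
    intro k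
    calc |f k| ≤ ∑ l ∈ Finset.range k, |m l| := Finset.abs_sum_le_sum_abs _ _
    _ ≤ ∑ l ∈ Finset.range k, S := Finset.sum_le_sum fun l _ => hmS l
    _ = S * k := by simp [mul_comm]
  have hhμ : Summable fun j => h j * μ j :=
    summable_of_abs_le hμsum (fun j => by
      rw [abs_mul]
      calc |h j| * |μ j| ≤ 1 * |μ j| :=
            mul_le_mul_of_nonneg_right (habs j) (abs_nonneg _)
      _ = μ j := by rw [one_mul, abs_of_nonneg (hμ0 j)])
  have hhpim : Summable fun k => h k * pim k :=
    summable_of_abs_le hpim1.summable (fun k => by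
      rw [abs_mul]
      calc |h k| * |pim k| ≤ 1 * |pim k| :=
            mul_le_mul_of_nonneg_right (habs k) (abs_nonneg _)
      _ = pim k := by rw [one_mul, abs_of_nonneg (hpim0 k)])
  have hcabs : |c| ≤ 1 := by
    rw [hc]
    have h1 : |∑' k, h k * pim k| ≤ ∑' k, |h k * pim k| := by
      have := norm_tsum_le_tsum_norm (f := fun k => h k * pim k)
        (by simp only [Real.norm_eq_abs]; exact hhpim.abs)
      simp only [Real.norm_eq_abs] at this
      exact this
    refine h1.trans ?_
    calc ∑' k, |h k * pim k| ≤ ∑' k, pim k := by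
          refine Summable.tsum_le_tsum (fun k => ?_) hhpim.abs hpim1.summable
          rw [abs_mul, abs_of_nonneg (hpim0 k)]
          exact mul_le_of_le_one_left (hpim0 k) (habs k)
    _ = 1 := hpim1.tsum_eq
  have hProw : ∀ j, ∑ k ∈ Finset.range (j + 2), P j k = 1 := by
    intro j
    have h0 : ∀ k ∉ Finset.range (j + 2), P j k = 0 := fun k hk =>
      hPsb j k (by simp only [Finset.mem_range] at hk; omega)
    exact (hasSum_sum_of_ne_finset_zero h0).unique (hPsum j)
  have hPoisson : ∀ j, ∑ k ∈ Finset.range (j + 2), P j k * f k = f j + (h j - c) :=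
    fun j => poisson P c h hProw hPpos j
  have hW : Summable fun pr : ℕ × ℕ => μ pr.1 * (Q pr.1 pr.2 * (pr.2 : ℝ)) :=
    W_summable Q μ hμ0 hQ0 hfin
  have hμQk : ∀ k, Summable fun i => μ i * Q i k := by
    intro k
    refine summable_of_abs_le hμsum (fun i => ?_)
    rw [abs_of_nonneg (mul_nonneg (hμ0 i) (hQ0 i k))]
    calc μ i * Q i k ≤ μ i * 1 := mul_le_mul_of_nonneg_left
          (le_hasSum (hQsum i) k (fun j _ => hQ0 i j)) (hμ0 i)
    _ = μ i := mul_one _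
  have hg : Summable fun pr : ℕ × ℕ => μ pr.1 * (Q pr.1 pr.2 * f pr.2) := by
    refine summable_of_abs_le (hW.mul_left S) (fun pr => ?_)
    rw [abs_mul, abs_mul, abs_of_nonneg (hμ0 _), abs_of_nonneg (hQ0 _ _)]
    calc μ pr.1 * (Q pr.1 pr.2 * |f pr.2|)
        ≤ μ pr.1 * (Q pr.1 pr.2 * (S * pr.2)) :=
          mul_le_mul_of_nonneg_left
            (mul_le_mul_of_nonneg_left (hfabs _) (hQ0 _ _)) (hμ0 _)
    _ = S * (μ pr.1 * (Q pr.1 pr.2 * pr.2)) := by ring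
  have hμf : Summable fun k => μ k * f k := by
    refine summable_of_abs_le (hμMean.mul_left S) (fun k => ?_)
    rw [abs_mul, abs_of_nonneg (hμ0 k)]
    calc μ k * |f k| ≤ μ k * (S * k) :=
          mul_le_mul_of_nonneg_left (hfabs k) (hμ0 k)
    _ = S * (k * μ k) := by ring
  set Qf : ℕ → ℝ := fun j => ∑' k, Q j k * f k with hQfdef
  have hμQf_eq : ∀ j, (∑' k, μ j * (Q j k * f k)) = μ j * Qf j := fun j =>
    tsum_mul_left
  have hμQf : Summable fun j => μ j * Qf j :=
    (summable_marginal hg).congr fun j => hμQf_eq j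
  have hBC : ∑' j, μ j * Qf j = ∑' k, μ k * f k := by
    have h1 : ∀ k, Summable fun j => μ j * (Q j k * f k) := fun k =>
      ((hμQk k).mul_right (f k)).congr fun j => by ring
    calc ∑' j, μ j * Qf j = ∑' j, ∑' k, μ j * (Q j k * f k) :=
          tsum_congr fun j => (hμQf_eq j).symm
    _ = ∑' k, ∑' j, μ j * (Q j k * f k) :=
          (Summable.tsum_comm' (f := fun j k => μ j * (Q j k * f k)) hg
            (fun j => hg.prod_factor j) h1).symm
    _ = ∑' k, (∑' j, μ j * Q j k) * f k := by
          refine tsum_congr fun k => ?_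
          rw [← tsum_mul_right]
          exact tsum_congr fun j => by ring
    _ = ∑' k, μ k * f k := tsum_congr fun k => by rw [hμstat k]
  set Pf : ℕ → ℝ := fun j => ∑ k ∈ Finset.range (j + 2), P j k * f k with hPfdef
  have hPfsubEq : ∀ j, Pf j - f j = h j - c := by
    intro j
    have : Pf j = f j + (h j - c) := hPoisson j
    rw [this]; ring
  have hμPfsub : Summable fun j => μ j * (Pf j - f j) := by
    refine summable_of_abs_le (hμsum.mul_left 2) (fun j => ?_)
    rw [hPfsubEq j, abs_mul, abs_of_nonneg (hμ0 j)]
    calc μ j * |h j - c| ≤ μ j * 2 := by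
          refine mul_le_mul_of_nonneg_left ((abs_sub _ _).trans ?_) (hμ0 j)
          linarith [habs j, hcabs]
    _ = 2 * μ j := mul_comm _ _
  have hμPf : Summable fun j => μ j * Pf j :=
    (hμPfsub.add hμf).congr fun j => by ring
  have hdTV1 : dTV μ pim = ∑' j, μ j * (h j - c) := by
    have e1 : ∀ j, |μ j - pim j| = h j * μ j - h j * pim j := by
      intro j
      rw [← my_sign_mul_self (μ j - pim j)]
      show Real.sign (μ j - pim j) * (μ j - pim j)
        = h j * μ j - h j * pim j
      have : h j = Real.sign (μ j - pim j) := rfl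
      rw [← this]; ring
    have e2 : ∑' j, μ j * (h j - c) = ∑' j, (h j * μ j - c * μ j) :=
      tsum_congr fun j => by ring
    show (∑' j, |μ j - pim j|) = _
    calc (∑' j, |μ j - pim j|) = ∑' j, (h j * μ j - h j * pim j) :=
          tsum_congr e1
    _ = (∑' j, h j * μ j) - ∑' j, h j * pim j := Summable.tsum_sub hhμ hhpim
    _ = (∑' j, h j * μ j) - c := by rw [← hc]
    _ = ∑' j, μ j * (h j - c) := by
          rw [e2, Summable.tsum_sub hhμ (hμsum.mul_left c), tsum_mul_left,
            hμ1.tsum_eq, mul_one]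
  have hdTV2 : dTV μ pim = ∑' j, μ j * (Pf j - Qf j) := by
    rw [hdTV1]
    have e : ∀ j, μ j * (h j - c)
        = μ j * (Pf j - Qf j) + (μ j * Qf j - μ j * f j) := by
      intro j
      rw [← hPfsubEq j]; ring
    rw [tsum_congr e,
      Summable.tsum_add ((hμPf.sub hμQf).congr fun j => by ring) (hμQf.sub hμf),
      Summable.tsum_sub hμQf hμf, hBC, sub_self, add_zero]
  set D : ℕ → ℕ → ℝ := fun j l => ∑' k, if l < k then Q j k - P j k else 0
    with hDdef
  set R : ℕ → ℝ := fun j => ∑' l, |D j l| with hRdef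
  have hR0 : ∀ j, 0 ≤ R j := fun j => tsum_nonneg fun l => abs_nonneg _
  have hrow : ∀ j, μ j ≠ 0 →
      |Pf j - Qf j| ≤ S * R j ∧ R j ≤ (∑' k, Q j k * k) + ((j : ℝ) + 2) := by
    intro j hμj
    have hqk : Summable fun k => Q j k * k :=
      ((hW.prod_factor j).mul_left (μ j)⁻¹).congr fun k => by
        rw [inv_mul_cancel_left₀ hμj]
    have hpfin : ∀ k, k ∉ Finset.range (j + 2) → P j k = 0 := fun k hk =>
      hPsb j k (by simp only [Finset.mem_range] at hk; omega)
    have hrb := row_bound (P j) (Q j) m S (j + 2) (hP0 j) (hQ0 j) (hPsum j)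
      (hQsum j).summable hpfin hqk hmS
    refine ⟨hrb.1, hrb.2.trans ?_⟩
    push_cast
    exact le_rfl
  have hμPQ : Summable fun j => μ j * (Pf j - Qf j) :=
    (hμPf.sub hμQf).congr fun j => by ring
  have habsPQ : Summable fun j => |μ j * (Pf j - Qf j)| := hμPQ.abs
  have hTb : Summable fun j =>
      S * ((∑' k, μ j * (Q j k * (k : ℝ))) + ((j : ℝ) + 2) * μ j) := by
    have h2 : Summable fun j : ℕ => ((j : ℝ) + 2) * μ j :=
      (hμMean.add (hμsum.mul_left 2)).congr fun j => by ring
    exact ((summable_marginal hW).add h2).mul_left S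
  have hmid : Summable fun j => μ j * (S * R j) := by
    refine Summable.of_nonneg_of_le
      (fun j => mul_nonneg (hμ0 j) (mul_nonneg hS0 (hR0 j))) (fun j => ?_) hTb
    by_cases hμj : μ j = 0
    · have hz : μ j * (S * R j) = 0 := by rw [hμj, zero_mul]
      rw [hz]
      refine mul_nonneg hS0 (add_nonneg (tsum_nonneg fun k =>
        mul_nonneg (hμ0 j) (mul_nonneg (hQ0 j k) (Nat.cast_nonneg k)))
        (mul_nonneg (by positivity) (hμ0 j)))
    · have h2 := (hrow j hμj).2
      calc μ j * (S * R j) = S * (μ j * R j) := by ring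
      _ ≤ S * (μ j * ((∑' k, Q j k * k) + ((j : ℝ) + 2))) :=
            mul_le_mul_of_nonneg_left
              (mul_le_mul_of_nonneg_left h2 (hμ0 j)) hS0
      _ = S * ((μ j * ∑' k, Q j k * k) + ((j : ℝ) + 2) * μ j) := by ring
      _ = S * ((∑' k, μ j * (Q j k * (k : ℝ))) + ((j : ℝ) + 2) * μ j) := by
            rw [← tsum_mul_left]
  have hperj : ∀ j, |μ j * (Pf j - Qf j)| ≤ μ j * (S * R j) := by
    intro j
    by_cases hμj : μ j = 0
    · rw [hμj]; simp
    · rw [abs_mul, abs_of_nonneg (hμ0 j)]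
      exact mul_le_mul_of_nonneg_left (hrow j hμj).1 (hμ0 j)
  calc dTV μ pim = ∑' j, μ j * (Pf j - Qf j) := hdTV2
    _ ≤ ∑' j, |μ j * (Pf j - Qf j)| := by
        refine le_trans (le_abs_self _) ?_
        have := norm_tsum_le_tsum_norm (f := fun j => μ j * (Pf j - Qf j))
          (by simp only [Real.norm_eq_abs]; exact habsPQ)
        simp only [Real.norm_eq_abs] at this
        exact this
    _ ≤ ∑' j, μ j * (S * R j) := Summable.tsum_le_tsum hperj habsPQ hmid
    _ = S * ∑' j, μ j * R j := by
        rw [tsum_congr (fun j => show μ j * (S * R j) = S * (μ j * R j) by ring),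
          tsum_mul_left]
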